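/- arXiv:1911.00264 — 2 statements merged into one kernel-verified Lean document; each statement's English description precedes it below -/
import Mathlib

section
/- Let G be a groupoid, H a subgroupoid of G, and K a normal subgroupoid of G such that every morphism of K is an endomorphism (i.e., K(X,Y) = ∅ whenever X ≠ Y). Then the arrow family HK, defined by (HK)(X,Y) = {f : X ⟶ Y | ∃ object Z, ∃ k ∈ K(X,Z), ∃ h ∈ H(Z,Y), f = k ≫ h}, is a subgroupoid of G (closed under inversion and composition). -/
open CategoryTheory

private lemma K_eq_src {C : Type*} [Groupoid C] {K : Subgroupoid C}
    (hKiso : ∀ X Y : C, X ≠ Y → K.arrows X Y = ∅) {X Z : C} {k : X ⟶ Z}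
    (hk : k ∈ K.arrows X Z) : X = Z := by
  by_contra h
  rw [hKiso X Z h] at hk
  exact hk

theorem product_with_isotropic_normal_is_subgroupoid {C : Type*} [Groupoid C]
    (H K : Subgroupoid C) (hK : K.IsNormal)
    (hKiso : ∀ X Y : C, X ≠ Y → K.arrows X Y = ∅) :
    ∃ S : Subgroupoid C,
      ∀ X Y : C, S.arrows X Y =
        {f : X ⟶ Y | ∃ (Z : C) (k : X ⟶ Z) (h : Z ⟶ Y),
          k ∈ K.arrows X Z ∧ h ∈ H.arrows Z Y ∧ f = k ≫ h} := by
  refine ⟨⟨fun X Y => {f : X ⟶ Y | ∃ (Z : C) (k : X ⟶ Z) (h : Z ⟶ Y),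
          k ∈ K.arrows X Z ∧ h ∈ H.arrows Z Y ∧ f = k ≫ h}, ?_, ?_⟩, fun X Y => rfl⟩
  · rintro X Y f ⟨Z, k, h, hk, hh, rfl⟩
    obtain rfl := K_eq_src hKiso hk
    refine ⟨Y, Groupoid.inv h ≫ Groupoid.inv k ≫ h, Groupoid.inv h,
      hK.conj h (K.inv hk), H.inv hh, ?_⟩
    simp [Groupoid.inv_eq_inv]
  · rintro X Y W f ⟨Z, k, h, hk, hh, rfl⟩ g ⟨Z', k', h', hk', hh', rfl⟩
    obtain rfl := K_eq_src hKiso hk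
    obtain rfl := K_eq_src hKiso hk'
    refine ⟨X, k ≫ (h ≫ k' ≫ Groupoid.inv h), h ≫ h',
      K.mul hk (hK.conj' h hk'), H.mul hh hh', ?_⟩
    simp [Groupoid.inv_eq_inv]
end

section
/- Let G be a groupoid and H, K normal subgroupoids of G such that every morphism of K is an endomorphism (i.e., K(X,Y) = ∅ whenever X ≠ Y). Then the arrow family HK, defined by (HK)(X,Y) = {f : X ⟶ Y | ∃ object Z, ∃ k ∈ K(X,Z), ∃ h ∈ H(Z,Y), f = k ≫ h}, is a normal subgroupoid of G. -/
open CategoryTheory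

theorem product_of_normals_isNormal {C : Type*} [Groupoid C]
    (H K : Subgroupoid C) (hH : H.IsNormal) (hK : K.IsNormal)
    (hKiso : ∀ X Y : C, X ≠ Y → K.arrows X Y = ∅) :
    ∃ S : Subgroupoid C, S.IsNormal ∧
      ∀ X Y : C, S.arrows X Y =
        {f : X ⟶ Y | ∃ (Z : C) (k : X ⟶ Z) (h : Z ⟶ Y),
          k ∈ K.arrows X Z ∧ h ∈ H.arrows Z Y ∧ f = k ≫ h} := by
  refine ⟨⟨(fun X Y => setOf fun f => ∃ (k : X ⟶ X) (h : X ⟶ Y),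
      k ∈ K.arrows X X ∧ h ∈ H.arrows X Y ∧ f = k ≫ h),
    ?_, ?_⟩, ⟨⟨?_⟩, ?_⟩, ?_⟩
  · rintro X Y f ⟨k, h, hk, hh, rfl⟩
    refine ⟨Groupoid.inv h ≫ Groupoid.inv k ≫ h, Groupoid.inv h, ?_, H.inv hh, ?_⟩
    · exact hK.conj h (K.inv hk)
    · simp
  · rintro X Y Z f ⟨k₁, h₁, hk₁, hh₁, rfl⟩ g ⟨k₂, h₂, hk₂, hh₂, rfl⟩
    refine ⟨k₁ ≫ (h₁ ≫ k₂ ≫ Groupoid.inv h₁), h₁ ≫ h₂,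
      K.mul hk₁ (hK.conj' h₁ hk₂), H.mul hh₁ hh₂, ?_⟩
    simp
  · intro X
    exact ⟨𝟙 X, 𝟙 X, hK.wide X, hH.wide X, by simp⟩
  · rintro X Y p γ ⟨k, h, hk, hh, rfl⟩
    refine ⟨Groupoid.inv p ≫ k ≫ p, Groupoid.inv p ≫ h ≫ p, hK.conj p hk, hH.conj p hh, ?_⟩
    simp
  · intro X Y
    ext f
    constructor
    · rintro ⟨k, h, hk, hh, rfl⟩
      exact ⟨X, k, h, hk, hh, rfl⟩
    · rintro ⟨Z, k, h, hk, hh, rfl⟩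
      obtain rfl : X = Z := by
        by_contra hne
        rw [hKiso X Z hne] at hk
        exact hk
      exact ⟨k, h, hk, hh, rfl⟩
end
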